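/- arXiv:2501.08638 — 3 statements merged into one kernel-verified Lean document; each statement's English description precedes it below -/
import Mathlib

section
/- Let k/k₀ be a Galois extension of fields with cyclic Galois group of order 4 generated by σ, and let L = {σ(z) - z : z ∈ k} be the image of the k₀-linear map σ - 1. If a, b ∈ k are linearly independent over k₀, then aL + bL = k. -/
open Subgroup FixedPoints Module Submodule LinearMap

set_option maxHeartbeats 2000000 in
/-- If `σ` has order 4 (so `k/k₀` is Galois of degree 4 over the fixed field `k₀`,
by Artin's theorem) and `a`, `b` are linearly independent over `k₀`, then
`aL + bL = k` where `L = Im(σ - 1)`. -/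
theorem aL_add_bL_eq_top {k : Type*} [Field k] (σ : k ≃+* k) (h4 : orderOf σ = 4)
    (a b : k)
    (hab : ∀ α β : k, σ α = α → σ β = β → α * a + β * b = 0 → α = 0 ∧ β = 0)
    (c : k) :
    ∃ z w : k, c = a * (σ z - z) + b * (σ w - w) := by
  classical
  have ha0 : a ≠ 0 := fun h =>
    one_ne_zero ((hab 1 0 (map_one σ) (map_zero σ) (by rw [h]; ring)).1)
  have hb0 : b ≠ 0 := fun h =>
    one_ne_zero ((hab 0 1 (map_zero σ) (map_one σ) (by rw [h]; ring)).2)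
  -- Setup: fixed field F, Artin's theorem
  have hfo : IsOfFinOrder σ := orderOf_pos_iff.mp (by rw [h4]; norm_num)
  haveI : Finite (zpowers σ) := hfo.finite_zpowers
  haveI : Fintype (zpowers σ) := Fintype.ofFinite _
  haveI : FaithfulSMul (zpowers σ) k :=
    ⟨fun {g h} H => Subtype.ext (RingEquiv.ext fun x => H x)⟩
  set F := FixedPoints.subfield (zpowers σ) k with hFdef
  have hrank : finrank F k = 4 := by
    rw [FixedPoints.finrank_eq_card (zpowers σ) k, ← Nat.card_eq_fintype_card,
      Nat.card_zpowers, h4]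
  have σpow : ∀ (n : ℕ) (x : k), σ x = x → (σ ^ n) x = x := by
    intro n x hx
    induction n with
    | zero => rfl
    | succ m ih => rw [pow_succ]; show (σ ^ m) (σ x) = x; rw [hx, ih]
  have mem_iff : ∀ x : k, x ∈ F ↔ σ x = x := by
    intro x
    constructor
    · intro hx; exact hx ⟨σ, mem_zpowers σ⟩
    · intro hx
      rintro ⟨g, n, rfl⟩
      show (σ ^ n) x = x
      induction n using Int.rec with
      | ofNat m => exact σpow m x hx
      | negSucc m =>
        have h1 : (σ ^ (m + 1)) x = x := σpow (m + 1) x hx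
        rw [zpow_negSucc]
        exact ((σ ^ (m + 1)).symm_apply_eq).mpr h1.symm
  haveI hfd : FiniteDimensional F k := inferInstance
  clear_value F
  -- σ as F-linear map
  have smulF : ∀ (r : F) (x : k), r • x = (r : k) * x := fun r x => rfl
  let σL : k →ₗ[F] k :=
    { toFun := σ
      map_add' := map_add σ
      map_smul' := by
        intro r x
        simp only [smulF, RingHom.id_apply, map_mul, (mem_iff (r : k)).mp r.2] }
  have hσL : ∀ x, σL x = σ x := fun _ => rfl
  -- order 4
  have σ4 : ∀ x, σ (σ (σ (σ x))) = x := by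
    intro x
    have h := pow_orderOf_eq_one σ
    rw [h4] at h
    have h' := DFunLike.congr_fun h x
    rw [show (4 : ℕ) = 3 + 1 from rfl, pow_succ] at h'
    rw [show (3 : ℕ) = 2 + 1 from rfl, pow_succ] at h'
    rw [show (2 : ℕ) = 1 + 1 from rfl, pow_succ, pow_one] at h'
    exact h'
  -- trace map
  let T : k →ₗ[F] k := LinearMap.id + σL + σL ∘ₗ σL + σL ∘ₗ σL ∘ₗ σL
  have hT : ∀ x, T x = x + σ x + σ (σ x) + σ (σ (σ x)) := fun _ => rfl
  have Tfix : ∀ x, σ (T x) = T x := by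
    intro x
    rw [hT, map_add, map_add, map_add, σ4]
    ring
  have Tσ : ∀ x, T (σ x) = T x := by
    intro x
    rw [hT, hT, σ4]
    ring
  -- T ≠ 0 (Dedekind)
  have hTne : ∃ e, T e ≠ 0 := by
    by_contra hcon
    push_neg at hcon
    have li := linearIndependent_monoidHom k k
    let f : Fin 4 → (k →* k) := fun i => ((σ ^ (i : ℕ) : k ≃+* k) : k →* k)
    have finj : Function.Injective f := by
      intro i j hij
      have hpow : σ ^ (i : ℕ) = σ ^ (j : ℕ) :=
        RingEquiv.ext fun x => DFunLike.congr_fun hij x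
      exact Fin.ext (pow_injOn_Iio_orderOf (by rw [h4]; exact i.is_lt)
        (by rw [h4]; exact j.is_lt) hpow)
    have li4 := li.comp f finj
    rw [Fintype.linearIndependent_iff] at li4
    have := li4 (fun _ => 1) ?_ 0
    · exact one_ne_zero this
    · funext x
      have hx := hcon x
      rw [hT] at hx
      simp only [Finset.sum_apply, Pi.smul_apply, Fin.sum_univ_four, one_smul, Pi.zero_apply]
      show (σ ^ (0:ℕ)) x + (σ ^ (1:ℕ)) x + (σ ^ (2:ℕ)) x + (σ ^ (3:ℕ)) x = 0
      rw [pow_zero, pow_one, show (2:ℕ) = 1 + 1 from rfl, pow_succ, pow_one,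
        show (3:ℕ) = (1+1) + 1 from rfl, pow_succ, pow_succ, pow_one]
      show x + σ x + σ (σ x) + σ (σ (σ x)) = 0
      exact hx
  -- S = σ - 1 and L = range S
  let S : k →ₗ[F] k := σL - LinearMap.id
  have hS : ∀ x, S x = σ x - x := fun _ => rfl
  set L := LinearMap.range S with hLdef
  have kerS : LinearMap.ker S = Submodule.span F {(1 : k)} := by
    ext x
    rw [LinearMap.mem_ker, Submodule.mem_span_singleton]
    constructor
    · intro hx
      have hfix : σ x = x := by
        have := hS x ▸ hx
        rwa [sub_eq_zero] at this
      exact ⟨⟨x, (mem_iff x).mpr hfix⟩, by rw [smulF]; ring⟩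
    · rintro ⟨r, rfl⟩
      rw [hS, smulF, mul_one, (mem_iff (r : k)).mp r.2, sub_self]
  have hkerrank : finrank F (LinearMap.ker S) = 1 := by
    rw [kerS]
    exact finrank_span_singleton one_ne_zero
  have hLrank : finrank F L = 3 := by
    have h := LinearMap.finrank_range_add_finrank_ker S
    rw [hrank, hkerrank, ← hLdef] at h
    omega
  have LsubkerT : L ≤ LinearMap.ker T := by
    rintro _ ⟨x, rfl⟩
    rw [LinearMap.mem_ker, hS, map_sub, Tσ, sub_self]
  have LeqkerT : L = LinearMap.ker T := by
    obtain ⟨e, he⟩ := hTne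
    refine Submodule.eq_of_le_of_finrank_le LsubkerT ?_
    have hlt : LinearMap.ker T < ⊤ := lt_top_iff_ne_top.mpr fun htop => he (by
      have : e ∈ LinearMap.ker T := htop ▸ Submodule.mem_top
      exact this)
    have := Submodule.finrank_lt (K := F) (V := k) hlt.ne
    omega
  -- multiplication linear maps
  let mulL : k → (k →ₗ[F] k) := fun u =>
    { toFun := fun x => u * x
      map_add' := fun x y => mul_add u x y
      map_smul' := fun r x => by
        simp only [smulF, RingHom.id_apply]; ring }
  have mulL_apply : ∀ u x, mulL u x = u * x := fun _ _ => rfl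
  have hmaprank : ∀ u : k, u ≠ 0 → ∀ p : Submodule F k,
      finrank F (p.map (mulL u)) = finrank F p := by
    intro u hu p
    let e : k ≃ₗ[F] k :=
      { mulL u with
        invFun := fun x => u⁻¹ * x
        left_inv := fun x => by
          show u⁻¹ * (u * x) = x
          rw [← mul_assoc, inv_mul_cancel₀ hu, one_mul]
        right_inv := fun x => by
          show u * (u⁻¹ * x) = x
          rw [← mul_assoc, mul_inv_cancel₀ hu, one_mul] }
    have hco : (e : k →ₗ[F] k) = mulL u := rfl
    rw [← hco]
    exact LinearEquiv.finrank_map_eq e p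
  set aL := L.map (mulL a) with haLdef
  set bL := L.map (mulL b) with hbLdef
  -- main claim
  have main : aL ⊔ bL = ⊤ := by
    by_contra hne
    have hlt : aL ⊔ bL < ⊤ := lt_top_iff_ne_top.mpr hne
    have hsup := Submodule.finrank_lt (K := F) (V := k) hlt.ne
    rw [hrank] at hsup
    have hrankaL : finrank F aL = 3 := by rw [haLdef, hmaprank a ha0, hLrank]
    have hrankbL : finrank F bL = 3 := by rw [hbLdef, hmaprank b hb0, hLrank]
    have haLsup : aL = aL ⊔ bL :=
      Submodule.eq_of_le_of_finrank_le le_sup_left (by omega)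
    have hbLsup : bL = aL ⊔ bL :=
      Submodule.eq_of_le_of_finrank_le le_sup_right (by omega)
    have habL : aL = bL := haLsup.trans hbLsup.symm
    set d := a * b⁻¹ with hddef
    have hd0 : d ≠ 0 := mul_ne_zero ha0 (inv_ne_zero hb0)
    have hdL : ∀ x ∈ L, d * x ∈ L := by
      intro x hx
      have h1 : a * x ∈ bL := by
        rw [← habL]
        exact ⟨x, hx, rfl⟩
      obtain ⟨y, hy, hxy⟩ := h1
      rw [mulL_apply] at hxy
      have : d * x = y := by
        rw [hddef]
        field_simp
        linear_combination -hxy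
      rwa [this]
    obtain ⟨e, he⟩ := hTne
    let g : k →ₗ[F] k := T ∘ₗ mulL d
    have hg : ∀ x, g x = T (d * x) := fun _ => rfl
    -- the scalar lam
    have hgefix : σ (g e) = g e := Tfix _
    have hTefix : σ (T e) = T e := Tfix _
    set lam := g e / T e with hlamdef
    have hlamfix : σ lam = lam := by rw [hlamdef, map_div₀, hgefix, hTefix]
    set lamF : F := ⟨lam, (mem_iff lam).mpr hlamfix⟩ with hlamFdef
    let h := g - lamF • T
    have hh : ∀ x, h x = T (d * x) - lam * T x := fun x => rfl
    have hhL : ∀ x ∈ L, h x = 0 := by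
      intro x hx
      have h1 : T (d * x) = 0 := by
        have := hdL x hx
        rw [LeqkerT] at this
        exact this
      have h2 : T x = 0 := by
        rw [LeqkerT] at hx
        exact hx
      rw [hh, h1, h2, mul_zero, sub_zero]
    have hhe : h e = 0 := by
      rw [hh, hlamdef, hg]
      field_simp
      ring
    have htop : L ⊔ Submodule.span F {e} = ⊤ := by
      by_contra hne2
      have hlt2 : L ⊔ Submodule.span F {e} < ⊤ := lt_top_iff_ne_top.mpr hne2
      have h5 := Submodule.finrank_lt (K := F) (V := k) hlt2.ne
      rw [hrank] at h5
      have hLeq : L = L ⊔ Submodule.span F {e} :=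
        Submodule.eq_of_le_of_finrank_le le_sup_left (by omega)
      have : e ∈ L := by
        rw [hLeq]
        exact Submodule.mem_sup_right (Submodule.mem_span_singleton_self e)
      rw [LeqkerT] at this
      exact he this
    have hzero : ∀ x, h x = 0 := by
      intro x
      have hx : x ∈ L ⊔ Submodule.span F {e} := htop ▸ Submodule.mem_top
      rw [Submodule.mem_sup] at hx
      obtain ⟨y, hy, z, hz, rfl⟩ := hx
      rw [Submodule.mem_span_singleton] at hz
      obtain ⟨r, rfl⟩ := hz
      rw [map_add, hhL y hy, map_smul, hhe, smul_zero, add_zero]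
    -- conclude d = lam
    have hTd : ∀ x, T ((d - lam) * x) = 0 := by
      intro x
      have h6 := hzero x
      rw [hh] at h6
      have h7 : T (lam * x) = lam * T x := by
        have := T.map_smul lamF x
        rwa [smulF, smulF] at this
      rw [sub_mul, map_sub, h7]
      exact h6
    have hdlam : d = lam := by
      by_contra hne3
      have h8 := hTd ((d - lam)⁻¹ * e)
      rw [← mul_assoc, mul_inv_cancel₀ (sub_ne_zero.mpr hne3), one_mul] at h8
      exact he h8
    have hdfix : σ d = d := hdlam ▸ hlamfix
    have heq : 1 * a + (-d) * b = 0 := by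
      rw [hddef]
      field_simp
      ring
    exact one_ne_zero ((hab 1 (-d) (map_one σ) (by rw [map_neg, hdfix]) heq).1)
  -- extract witnesses
  have hc : c ∈ aL ⊔ bL := main ▸ Submodule.mem_top
  rw [Submodule.mem_sup] at hc
  obtain ⟨y, hy, w, hw, hyw⟩ := hc
  obtain ⟨y', hy', rfl⟩ := hy
  obtain ⟨w', hw', rfl⟩ := hw
  obtain ⟨z, rfl⟩ := hy'
  obtain ⟨v, rfl⟩ := hw'
  exact ⟨z, v, hyw.symm⟩
end

section
/- Let k/k₀ be a Galois extension with cyclic Galois group of order 4 generated by σ, with normal basis {y, σ(y), σ²(y), σ³(y)}, let L = Im(σ - 1), and let c ∈ k satisfy σ²(c) ≠ c. Then there exist a, b ∈ L with c = ab and, for every i ∈ ℤ, aL + σ^i(b)L = k. -/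
namespace FactorAux

variable {k : Type*} [Field k]

/-- The trace for an order-4 automorphism. -/
def Tr (σ : k ≃+* k) (z : k) : k := z + σ z + σ (σ z) + σ (σ (σ z))

theorem Tr_fix (σ : k ≃+* k) (h4' : ∀ z, σ (σ (σ (σ z))) = z) (z : k) :
    σ (Tr σ z) = Tr σ z := by
  simp only [Tr, map_add, h4']
  ring

theorem Tr_smul (σ : k ≃+* k) {e : k} (he : σ e = e) (z : k) :
    Tr σ (e * z) = e * Tr σ z := by
  simp only [Tr, map_mul, he]
  ring

theorem Tr_sub (σ : k ≃+* k) (x z : k) : Tr σ (x - z) = Tr σ x - Tr σ z := by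
  simp only [Tr, map_sub]
  ring

theorem hilbert90 (σ : k ≃+* k) (h4' : ∀ z, σ (σ (σ (σ z))) = z) {y : k}
    (ht : Tr σ y ≠ 0) {z : k} (hz : Tr σ z = 0) : ∃ w, z = σ w - w := by
  refine ⟨-(Tr σ y)⁻¹ * (z * σ y + (z + σ z) * σ (σ y) + (z + σ z + σ (σ z)) * σ (σ (σ y))), ?_⟩
  have ht1 : (Tr σ y)⁻¹ * Tr σ y = 1 := inv_mul_cancel₀ ht
  have hσinv : σ ((Tr σ y)⁻¹) = (Tr σ y)⁻¹ := by rw [map_inv₀, Tr_fix σ h4']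
  simp only [map_neg, map_mul, map_add, hσinv, h4']
  simp only [Tr] at hz ht1 ⊢
  linear_combination ((y + σ y + σ (σ y) + σ (σ (σ y)))⁻¹ * y) * hz - z * ht1

theorem key (σ : k ≃+* k) (h4' : ∀ z, σ (σ (σ (σ z))) = z) {y : k}
    (ht : Tr σ y ≠ 0) {v : k} (hv : σ v ≠ v) (d : k) :
    ∃ l₁ l₂ : k, d = (σ l₁ - l₁) + v * (σ l₂ - l₂) := by
  by_cases hex : ∃ w : k, Tr σ (v * (σ w - w)) ≠ 0
  · obtain ⟨w, hs⟩ := hex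
    have he : σ (Tr σ d / Tr σ (v * (σ w - w))) = Tr σ d / Tr σ (v * (σ w - w)) := by
      rw [map_div₀, Tr_fix σ h4', Tr_fix σ h4']
    refine ?_
    set e := Tr σ d / Tr σ (v * (σ w - w)) with hedef
    have h1 : σ (e * w) - e * w = e * (σ w - w) := by rw [map_mul, he]; ring
    have h2 : Tr σ (d - v * (σ (e * w) - e * w)) = 0 := by
      rw [h1, show v * (e * (σ w - w)) = e * (v * (σ w - w)) by ring, Tr_sub,
        Tr_smul σ he, hedef, div_mul_cancel₀ _ hs, sub_self]
    obtain ⟨w₁, hw₁⟩ := hilbert90 σ h4' ht h2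
    exact ⟨w₁, e * w, by linear_combination hw₁⟩
  · exfalso
    push_neg at hex
    have hz0 : ∀ z, Tr σ z = 0 → Tr σ (v * z) = 0 := by
      intro z hzz
      obtain ⟨w, hw⟩ := hilbert90 σ h4' ht hzz
      rw [hw]; exact hex w
    have hall : ∀ z, Tr σ (v * z) = (Tr σ (v * y) / Tr σ y) * Tr σ z := by
      intro z
      have hef : σ (Tr σ z / Tr σ y) = Tr σ z / Tr σ y := by
        rw [map_div₀, Tr_fix σ h4', Tr_fix σ h4']
      have h0 : Tr σ (z - Tr σ z / Tr σ y * y) = 0 := by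
        rw [Tr_sub, Tr_smul σ hef, div_mul_cancel₀ _ ht, sub_self]
      have h1 := hz0 _ h0
      rw [show v * (z - Tr σ z / Tr σ y * y) = v * z - Tr σ z / Tr σ y * (v * y) by ring,
        Tr_sub, Tr_smul σ hef] at h1
      have h2 := sub_eq_zero.mp h1
      rw [h2]; ring
    set lam := Tr σ (v * y) / Tr σ y with hlam
    have hlf : σ lam = lam := by
      rw [hlam, map_div₀, Tr_fix σ h4', Tr_fix σ h4']
    by_cases hvl : v = lam
    · exact hv (by rw [hvl, hlf])
    · have hne : v - lam ≠ 0 := sub_ne_zero.mpr hvl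
      have h1 : Tr σ (v * ((v - lam)⁻¹ * y) - lam * ((v - lam)⁻¹ * y)) = 0 := by
        rw [Tr_sub, hall, Tr_smul σ hlf]; ring
      have h2 : v * ((v - lam)⁻¹ * y) - lam * ((v - lam)⁻¹ * y) = y := by
        field_simp
      rw [h2] at h1
      exact ht h1

end FactorAux
open FactorAux in
/-- Order-4 case, `σ²(c) ≠ c`: there are `a, b ∈ L = Im(σ - 1)` with `c = ab` and
`aL + σ^i(b)L = k` for every `i : ℤ`. -/
theorem factor_of_not_fixed_by_sq {k : Type*} [Field k] (σ : k ≃+* k)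
    (h4 : orderOf σ = 4) (y : k)
    (hindep : ∀ c₀ c₁ c₂ c₃ : k, σ c₀ = c₀ → σ c₁ = c₁ → σ c₂ = c₂ → σ c₃ = c₃ →
      c₀ * y + c₁ * σ y + c₂ * σ (σ y) + c₃ * σ (σ (σ y)) = 0 →
      c₀ = 0 ∧ c₁ = 0 ∧ c₂ = 0 ∧ c₃ = 0)
    (hspan : ∀ z : k, ∃ c₀ c₁ c₂ c₃ : k, σ c₀ = c₀ ∧ σ c₁ = c₁ ∧ σ c₂ = c₂ ∧ σ c₃ = c₃ ∧
      z = c₀ * y + c₁ * σ y + c₂ * σ (σ y) + c₃ * σ (σ (σ y)))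
    (c : k) (hc : σ (σ c) ≠ c) :
    ∃ a b : k, (∃ z : k, a = σ z - z) ∧ (∃ z : k, b = σ z - z) ∧ c = a * b ∧
      ∀ i : ℤ, ∀ d : k, ∃ l₁ l₂ : k,
        d = a * (σ l₁ - l₁) + ((σ ^ i) b) * (σ l₂ - l₂) := by
  -- σ has order 4
  have h4' : ∀ z : k, σ (σ (σ (σ z))) = z := by
    have h := pow_orderOf_eq_one σ
    rw [h4, show (4:ℕ) = 3+1 from rfl, pow_succ, show (3:ℕ) = 2+1 from rfl, pow_succ,
      pow_two] at h
    exact fun z => DFunLike.congr_fun h z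
  -- the trace of y is nonzero
  have ht : Tr σ y ≠ 0 := by
    intro h
    have h0 : (1:k) * y + 1 * σ y + 1 * σ (σ y) + 1 * σ (σ (σ y)) = 0 := by
      simp only [Tr] at h; linear_combination h
    exact one_ne_zero (hindep 1 1 1 1 (map_one σ) (map_one σ) (map_one σ) (map_one σ) h0).1
  have hc0 : c ≠ 0 := fun h => hc (by rw [h, map_zero, map_zero])
  -- choose a fixed combination with trace of c * btl zero
  have hchoice : ∃ α β : k, σ α = α ∧ σ β = β ∧ ¬(α = 0 ∧ β = 0) ∧
      Tr σ (c * (α * (y - σ (σ y)) + β * (σ y - σ (σ (σ y))))) = 0 := by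
    by_cases h1 : Tr σ (c * (y - σ (σ y))) = 0
    · refine ⟨1, 0, map_one σ, map_zero σ, by simp, ?_⟩
      rw [show c * ((1:k) * (y - σ (σ y)) + 0 * (σ y - σ (σ (σ y)))) = c * (y - σ (σ y))
        by ring]
      exact h1
    · refine ⟨Tr σ (c * (σ y - σ (σ (σ y)))), -(Tr σ (c * (y - σ (σ y)))),
        Tr_fix σ h4' _, by rw [map_neg, Tr_fix σ h4'], fun h => h1 (neg_eq_zero.mp h.2), ?_⟩
      rw [show c * (Tr σ (c * (σ y - σ (σ (σ y)))) * (y - σ (σ y)) +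
            -(Tr σ (c * (y - σ (σ y)))) * (σ y - σ (σ (σ y)))) =
          Tr σ (c * (σ y - σ (σ (σ y)))) * (c * (y - σ (σ y))) -
            Tr σ (c * (y - σ (σ y))) * (c * (σ y - σ (σ (σ y)))) by ring,
        Tr_sub, Tr_smul σ (Tr_fix σ h4' _), Tr_smul σ (Tr_fix σ h4' _)]
      ring
  obtain ⟨α, β, hαf, hβf, hnz, hT0⟩ := hchoice
  set btl := α * (y - σ (σ y)) + β * (σ y - σ (σ (σ y))) with hbtl_def
  have hbtl : btl ≠ 0 := by
    intro h
    have h0 : α * y + β * σ y + (-α) * σ (σ y) + (-β) * σ (σ (σ y)) = 0 := by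
      rw [hbtl_def] at h; linear_combination h
    have := hindep α β (-α) (-β) hαf hβf (by rw [map_neg, hαf]) (by rw [map_neg, hβf]) h0
    exact hnz ⟨this.1, this.2.1⟩
  have hσ2btl : σ (σ btl) = -btl := by
    rw [hbtl_def]
    simp only [map_add, map_mul, map_sub, hαf, hβf, h4']
    ring
  have ha0 : c * btl ≠ 0 := mul_ne_zero hc0 hbtl
  obtain ⟨za, hza⟩ := hilbert90 σ h4' ht hT0
  have hσ2b : σ (σ btl⁻¹) = -btl⁻¹ := by
    rw [map_inv₀, map_inv₀, hσ2btl, inv_neg]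
  have hTb : Tr σ btl⁻¹ = 0 := by
    simp only [Tr]
    rw [hσ2b, map_neg]
    ring
  obtain ⟨zb, hzb⟩ := hilbert90 σ h4' ht hTb
  refine ⟨c * btl, btl⁻¹, ⟨za, hza⟩, ⟨zb, hzb⟩, by field_simp, ?_⟩
  intro i d
  have hm : ∀ (f g : k ≃+* k) (z : k), (f * g) z = f (g z) := fun _ _ _ => rfl
  have hcomm : ∀ x : k, σ ((σ ^ i) x) = (σ ^ i) (σ x) := by
    intro x
    have h := DFunLike.congr_fun ((Commute.refl σ).zpow_right i).eq x
    rw [hm, hm] at h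
    exact h
  set u := (σ ^ i) btl⁻¹ with hu_def
  have hu2 : σ (σ u) = -u := by
    rw [hu_def, hcomm, hcomm, hσ2b, map_neg]
  have hu0 : u ≠ 0 := by
    rw [hu_def]
    intro h
    exact inv_ne_zero hbtl ((σ ^ i).injective (by simpa using h))
  have hσ2c0 : σ (σ c) ≠ 0 := by
    intro h
    exact hc0 (σ.injective (σ.injective (by simpa using h)))
  have hσv : σ (u / (c * btl)) ≠ u / (c * btl) := by
    intro hσv
    have h2 : σ (σ (u / (c * btl))) = u / (c * btl) := by rw [hσv, hσv]
    rw [map_div₀, map_div₀, map_mul, map_mul, hu2, hσ2btl, mul_neg, neg_div_neg_eq] at h2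
    apply hc
    have h3 := mul_left_cancel₀ hu0 (by
      rw [← div_eq_mul_inv, ← div_eq_mul_inv, h2] :
      u * (σ (σ c) * btl)⁻¹ = u * (c * btl)⁻¹)
    have h4 := inv_injective h3
    exact mul_right_cancel₀ hbtl h4
  obtain ⟨l₁, l₂, hl⟩ := key σ h4' ht hσv (d / (c * btl))
  refine ⟨l₁, l₂, ?_⟩
  field_simp at hl
  linear_combination hl
end

section
/- Let k/k₀ be a Galois extension with cyclic Galois group of order 4 generated by σ, with normal basis {y, σ(y), σ²(y), σ³(y)}, let L = Im(σ-1), k₁ = {z : σ(z) = -z}, and let c ∈ k satisfy σ²(c) = c and c ∉ k₁. Then there exist a, b ∈ L with c = ab and aL + σ^i(b)L = k for all i ∈ ℤ. -/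
/-- Order-4 case, `σ²(c) = c` but `c ∉ k₁ = {z : σ(z) = -z}`: there are
`a, b ∈ L = Im(σ - 1)` with `c = ab` and `aL + σ^i(b)L = k` for every `i : ℤ`. -/
theorem factor_of_fixed_by_sq_not_k1 {k : Type*} [Field k] (σ : k ≃+* k)
    (h4 : orderOf σ = 4) (y : k)
    (hindep : ∀ c₀ c₁ c₂ c₃ : k, σ c₀ = c₀ → σ c₁ = c₁ → σ c₂ = c₂ → σ c₃ = c₃ →
      c₀ * y + c₁ * σ y + c₂ * σ (σ y) + c₃ * σ (σ (σ y)) = 0 →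
      c₀ = 0 ∧ c₁ = 0 ∧ c₂ = 0 ∧ c₃ = 0)
    (hspan : ∀ z : k, ∃ c₀ c₁ c₂ c₃ : k, σ c₀ = c₀ ∧ σ c₁ = c₁ ∧ σ c₂ = c₂ ∧ σ c₃ = c₃ ∧
      z = c₀ * y + c₁ * σ y + c₂ * σ (σ y) + c₃ * σ (σ (σ y)))
    (c : k) (hc : σ (σ c) = c) (hc1 : σ c ≠ -c) :
    ∃ a b : k, (∃ z : k, a = σ z - z) ∧ (∃ z : k, b = σ z - z) ∧ c = a * b ∧
      ∀ i : ℤ, ∀ d : k, ∃ l₁ l₂ : k,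
        d = a * (σ l₁ - l₁) + ((σ ^ i) b) * (σ l₂ - l₂) := by
  have s4 : ∀ x : k, σ (σ (σ (σ x))) = x := by
    intro x
    have h := pow_orderOf_eq_one σ
    rw [h4] at h
    have h2 : (σ ^ 4) x = x := by rw [h]; rfl
    rw [show (4:ℕ) = 3 + 1 from rfl, pow_succ] at h2
    exact h2
  -- the trace and its basic properties
  have trace_fix : ∀ x : k, σ (x + σ x + σ (σ x) + σ (σ (σ x)))
      = x + σ x + σ (σ x) + σ (σ (σ x)) := by
    intro x; rw [map_add, map_add, map_add, s4]; ring
  have trace_mul_fixed : ∀ e z : k, σ e = e →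
      (e * z) + σ (e * z) + σ (σ (e * z)) + σ (σ (σ (e * z)))
        = e * (z + σ z + σ (σ z) + σ (σ (σ z))) := by
    intro e z he
    simp only [map_mul, he]; ring
  have trace_sub : ∀ x z : k,
      (x - z) + σ (x - z) + σ (σ (x - z)) + σ (σ (σ (x - z)))
        = (x + σ x + σ (σ x) + σ (σ (σ x))) - (z + σ z + σ (σ z) + σ (σ (σ z))) := by
    intro x z; simp only [map_sub]; ring
  have trace_lin4 : ∀ e₀ e₁ e₂ e₃ z₀ z₁ z₂ z₃ : k,
      σ e₀ = e₀ → σ e₁ = e₁ → σ e₂ = e₂ → σ e₃ = e₃ →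
      (e₀*z₀ + e₁*z₁ + e₂*z₂ + e₃*z₃) + σ (e₀*z₀ + e₁*z₁ + e₂*z₂ + e₃*z₃)
        + σ (σ (e₀*z₀ + e₁*z₁ + e₂*z₂ + e₃*z₃))
        + σ (σ (σ (e₀*z₀ + e₁*z₁ + e₂*z₂ + e₃*z₃)))
      = e₀ * (z₀ + σ z₀ + σ (σ z₀) + σ (σ (σ z₀)))
        + e₁ * (z₁ + σ z₁ + σ (σ z₁) + σ (σ (σ z₁)))
        + e₂ * (z₂ + σ z₂ + σ (σ z₂) + σ (σ (σ z₂)))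
        + e₃ * (z₃ + σ z₃ + σ (σ z₃) + σ (σ (σ z₃))) := by
    intro e₀ e₁ e₂ e₃ z₀ z₁ z₂ z₃ h₀ h₁ h₂ h₃
    simp only [map_add, map_mul, h₀, h₁, h₂, h₃]; ring
  have hTne : y + σ y + σ (σ y) + σ (σ (σ y)) ≠ 0 := by
    intro h0
    have := hindep 1 1 1 1 (map_one σ) (map_one σ) (map_one σ) (map_one σ)
      (by linear_combination h0)
    exact one_ne_zero this.1
  have trY1 : σ y + σ (σ y) + σ (σ (σ y)) + σ (σ (σ (σ y)))
      = y + σ y + σ (σ y) + σ (σ (σ y)) := by simp only [s4]; ring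
  have trY2 : σ (σ y) + σ (σ (σ y)) + σ (σ (σ (σ y))) + σ (σ (σ (σ (σ y))))
      = y + σ y + σ (σ y) + σ (σ (σ y)) := by simp only [s4]; ring
  have trY3 : σ (σ (σ y)) + σ (σ (σ (σ y))) + σ (σ (σ (σ (σ y)))) + σ (σ (σ (σ (σ (σ y)))))
      = y + σ y + σ (σ y) + σ (σ (σ y)) := by simp only [s4]; ring
  -- kernel of trace is contained in the image of σ - 1
  have memL : ∀ z : k, z + σ z + σ (σ z) + σ (σ (σ z)) = 0 → ∃ w : k, z = σ w - w := by
    intro z hz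
    obtain ⟨d₀, d₁, d₂, d₃, h₀, h₁, h₂, h₃, hz'⟩ := hspan z
    have hsum : (d₀ + d₁ + d₂ + d₃) * (y + σ y + σ (σ y) + σ (σ (σ y))) = 0 := by
      rw [hz'] at hz
      simp only [map_add, map_mul, h₀, h₁, h₂, h₃, s4] at hz
      linear_combination hz
    have hs0 : d₀ + d₁ + d₂ + d₃ = 0 := by
      rcases mul_eq_zero.mp hsum with h | h
      · exact h
      · exact absurd h hTne
    refine ⟨-(d₁ * σ y) - (d₁ + d₂) * σ (σ y) - (d₁ + d₂ + d₃) * σ (σ (σ y)), ?_⟩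
    rw [hz']
    simp only [map_sub, map_neg, map_add, map_mul, h₁, h₂, h₃, s4]
    linear_combination y * hs0
  have memL2 : ∀ z : k, σ (σ z) = -z → ∃ w : k, z = σ w - w := by
    intro z hz
    apply memL
    rw [hz, map_neg]; ring
  -- the surjectivity lemma: if t is not fixed by σ then every d is in A*L + (A*t)*L
  have surj : ∀ t : k, σ t ≠ t → ∀ A : k, A ≠ 0 → ∀ d : k, ∃ l₁ l₂ : k,
      d = A * (σ l₁ - l₁) + (A * t) * (σ l₂ - l₂) := by
    intro t ht A hA d
    obtain ⟨l, hl0, hlt⟩ : ∃ l : k, (l + σ l + σ (σ l) + σ (σ (σ l)) = 0) ∧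
        (t * l + σ (t * l) + σ (σ (t * l)) + σ (σ (σ (t * l))) ≠ 0) := by
      by_contra hcon
      push_neg at hcon
      have key : ∀ x z : k,
          (x + σ x + σ (σ x) + σ (σ (σ x)) = z + σ z + σ (σ z) + σ (σ (σ z))) →
          (t*x + σ (t*x) + σ (σ (t*x)) + σ (σ (σ (t*x)))
            = t*z + σ (t*z) + σ (σ (t*z)) + σ (σ (σ (t*z)))) := by
        intro x z hxz
        have h1 : (x - z) + σ (x - z) + σ (σ (x - z)) + σ (σ (σ (x - z))) = 0 := by
          rw [trace_sub, hxz]; ring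
        have h2 := hcon (x - z) h1
        rw [mul_sub, trace_sub] at h2
        exact sub_eq_zero.mp h2
      have e1 := key (σ y) y trY1
      have e2 := key (σ (σ y)) y trY2
      have e3 := key (σ (σ (σ y))) y trY3
      set κ := (t*y + σ (t*y) + σ (σ (t*y)) + σ (σ (σ (t*y))))
          * (y + σ y + σ (σ y) + σ (σ (σ y)))⁻¹ with hκ
      have hκfix : σ κ = κ := by rw [hκ, map_mul, map_inv₀, trace_fix, trace_fix]
      by_cases hs : t - κ = 0
      · apply ht
        rw [sub_eq_zero.mp hs]
        exact hκfix
      · obtain ⟨d₀, d₁, d₂, d₃, h₀, h₁, h₂, h₃, hdec⟩ := hspan ((t - κ)⁻¹ * y)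
        have hs0 : ∀ x : k,
            (x + σ x + σ (σ x) + σ (σ (σ x)) = y + σ y + σ (σ y) + σ (σ (σ y))) →
            (t*x + σ (t*x) + σ (σ (t*x)) + σ (σ (σ (t*x)))
              = t*y + σ (t*y) + σ (σ (t*y)) + σ (σ (σ (t*y)))) →
            ((t-κ)*x + σ ((t-κ)*x) + σ (σ ((t-κ)*x)) + σ (σ (σ ((t-κ)*x))) = 0) := by
          intro x hx htx
          have h1 : (t-κ)*x = t*x - κ*x := by ring
          rw [h1, trace_sub, htx, trace_mul_fixed κ x hκfix, hx, hκ,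
            mul_assoc, inv_mul_cancel₀ hTne, mul_one, sub_self]
        have hTr0 := hs0 y rfl rfl
        have hTr1 := hs0 (σ y) trY1 e1
        have hTr2 := hs0 (σ (σ y)) trY2 e2
        have hTr3 := hs0 (σ (σ (σ y))) trY3 e3
        have lin := trace_lin4 d₀ d₁ d₂ d₃ ((t-κ)*y) ((t-κ)*σ y) ((t-κ)*σ (σ y))
          ((t-κ)*σ (σ (σ y))) h₀ h₁ h₂ h₃
        rw [hTr0, hTr1, hTr2, hTr3] at lin
        have hbig : d₀ * ((t-κ)*y) + d₁ * ((t-κ)*σ y) + d₂ * ((t-κ)*σ (σ y))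
            + d₃ * ((t-κ)*σ (σ (σ y))) = y := by
          have hy' : (t-κ) * ((t-κ)⁻¹ * y) = y := by
            rw [← mul_assoc, mul_inv_cancel₀ hs, one_mul]
          conv_rhs => rw [← hy', hdec]
          ring
        rw [hbig] at lin
        apply hTne
        rw [lin]; ring
    have hτfix := trace_fix (t*l)
    set D := A⁻¹ * d with hD
    set κ := (D + σ D + σ (σ D) + σ (σ (σ D)))
        * (t*l + σ (t*l) + σ (σ (t*l)) + σ (σ (σ (t*l))))⁻¹ with hκ
    have hκfix : σ κ = κ := by rw [hκ, map_mul, map_inv₀, trace_fix, hτfix]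
    have hm₂ : (κ*l) + σ (κ*l) + σ (σ (κ*l)) + σ (σ (σ (κ*l))) = 0 := by
      rw [trace_mul_fixed κ l hκfix, hl0, mul_zero]
    have hm₁ : (D - t*(κ*l)) + σ (D - t*(κ*l)) + σ (σ (D - t*(κ*l)))
        + σ (σ (σ (D - t*(κ*l)))) = 0 := by
      rw [trace_sub]
      have h1 : t*(κ*l) = κ*(t*l) := by ring
      rw [h1, trace_mul_fixed κ (t*l) hκfix, hκ, mul_assoc, inv_mul_cancel₀ hlt,
        mul_one, sub_self]
    obtain ⟨l₁, hl₁⟩ := memL _ hm₁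
    obtain ⟨l₂, hl₂⟩ := memL _ hm₂
    refine ⟨l₁, l₂, ?_⟩
    rw [← hl₁, ← hl₂, hD]
    field_simp
    ring
  -- basic nonvanishing facts
  have hc0 : c ≠ 0 := fun h => hc1 (by rw [h, map_zero, neg_zero])
  set p := y - σ (σ y) with hp
  set q := σ y - σ (σ (σ y)) with hq
  have hσp : σ p = q := by rw [hp, hq, map_sub]
  have hσq : σ q = -p := by rw [hq, hp, map_sub, s4]; ring
  have hp2 : σ (σ p) = -p := by rw [hσp, hσq]
  have hq2 : σ (σ q) = -q := by rw [hσq, map_neg, hσp]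
  have hpq2 : σ (σ (p+q)) = -(p+q) := by
    simp only [map_add, hσp, hσq, map_neg]; ring
  have hp0 : p ≠ 0 := by
    intro h
    rw [hp] at h
    have := hindep 1 0 (-1) 0 (map_one σ) (map_zero σ)
      (by rw [map_neg, map_one]) (map_zero σ) (by linear_combination h)
    exact one_ne_zero this.1
  have hq0 : q ≠ 0 := by
    intro h
    apply hp0
    apply σ.injective
    rw [hσp, h, map_zero]
  have hpq0 : p + q ≠ 0 := by
    intro h
    rw [hp, hq] at h
    have := hindep 1 1 (-1) (-1) (map_one σ) (map_one σ)
      (by rw [map_neg, map_one]) (by rw [map_neg, map_one]) (by linear_combination h)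
    exact one_ne_zero this.1
  -- cancellation helper
  have inv_eq : ∀ u v : k, v ≠ 0 → σ v ≠ 0 → σ (u * v⁻¹) = u * v⁻¹ → σ u * v = u * σ v := by
    intro u v hv hσv h
    rw [map_mul, map_inv₀] at h
    field_simp at h
    linear_combination h
  -- the key construction
  have key : ∀ a : k, a ≠ 0 → σ (σ a) = -a → σ c * (a*a) ≠ c * (σ a * σ a) →
      ∃ a' b : k, (∃ z : k, a' = σ z - z) ∧ (∃ z : k, b = σ z - z) ∧ c = a' * b ∧
        ∀ i : ℤ, ∀ d : k, ∃ l₁ l₂ : k,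
          d = a' * (σ l₁ - l₁) + ((σ ^ i) b) * (σ l₂ - l₂) := by
    intro a ha0 ha2 hG
    have hσa0 : σ a ≠ 0 := fun h => ha0 (σ.injective (h.trans (map_zero σ).symm))
    set b := c * a⁻¹ with hb
    have hb2 : σ (σ b) = -b := by
      rw [hb, map_mul, map_mul, map_inv₀, map_inv₀, hc, ha2, inv_neg]
      ring
    have hab : c = a * b := by rw [hb]; field_simp
    refine ⟨a, b, memL2 a ha2, memL2 b hb2, hab, ?_⟩
    intro i d
    have hmod : (σ ^ i) b = (σ ^ (i % 4)) b := by
      conv_rhs => rw [show (4:ℤ) = ((4:ℕ):ℤ) from rfl, ← h4, zpow_mod_orderOf]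
    have hσb : σ b = σ c * (σ a)⁻¹ := by rw [hb, map_mul, map_inv₀]
    have haa0 : a * a ≠ 0 := mul_ne_zero ha0 ha0
    have hσaa0 : σ (a * a) ≠ 0 := by rw [map_mul]; exact mul_ne_zero hσa0 hσa0
    have hasa0 : a * σ a ≠ 0 := mul_ne_zero ha0 hσa0
    have hσasa0 : σ (a * σ a) ≠ 0 := by
      rw [map_mul]; exact mul_ne_zero hσa0 (fun h => hσa0 (σ.injective (h.trans (map_zero σ).symm)))
    -- non-fixedness of c/(a*a)
    have ht0 : σ (c * (a*a)⁻¹) ≠ c * (a*a)⁻¹ := by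
      intro hE
      apply hG
      have h' := inv_eq c (a*a) haa0 hσaa0 hE
      rw [map_mul] at h'
      exact h'
    -- non-fixedness of σ c/(a * σ a)
    have ht1 : σ (σ c * (a * σ a)⁻¹) ≠ σ c * (a * σ a)⁻¹ := by
      intro hE
      have h' := inv_eq (σ c) (a * σ a) hasa0 hσasa0 hE
      rw [hc, map_mul, ha2] at h'
      have h'' : (σ c + c) * (a * σ a) = 0 := by linear_combination h'
      rcases mul_eq_zero.mp h'' with h3 | h3
      · exact hc1 (eq_neg_of_add_eq_zero_left h3)
      · exact hasa0 h3
    have hr : i % 4 = 0 ∨ i % 4 = 1 ∨ i % 4 = 2 ∨ i % 4 = 3 := by omega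
    rcases hr with h | h | h | h
    · -- i ≡ 0 : σ^i b = b
      have he : (σ ^ (0:ℤ)) b = b := rfl
      obtain ⟨l₁, l₂, hl⟩ := surj _ ht0 a ha0 d
      refine ⟨l₁, l₂, ?_⟩
      rw [hmod, h, he]
      have hat : a * (c * (a*a)⁻¹) = b := by rw [hb]; field_simp
      rw [hat] at hl
      exact hl
    · -- i ≡ 1 : σ^i b = σ b
      have he : (σ ^ (1:ℤ)) b = σ b := by rw [zpow_one]
      obtain ⟨l₁, l₂, hl⟩ := surj _ ht1 a ha0 d
      refine ⟨l₁, l₂, ?_⟩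
      rw [hmod, h, he]
      have hat : a * (σ c * (a * σ a)⁻¹) = σ b := by rw [hσb]; field_simp
      rw [hat] at hl
      exact hl
    · -- i ≡ 2 : σ^i b = -b
      have he : (σ ^ (2:ℤ)) b = -b := by
        rw [show (2:ℤ) = ((2:ℕ):ℤ) from rfl, zpow_natCast]
        show σ (σ b) = -b
        exact hb2
      have ht2 : σ (-(c * (a*a)⁻¹)) ≠ -(c * (a*a)⁻¹) := by
        intro hE
        rw [map_neg, neg_inj] at hE
        exact ht0 hE
      obtain ⟨l₁, l₂, hl⟩ := surj _ ht2 a ha0 d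
      refine ⟨l₁, l₂, ?_⟩
      rw [hmod, h, he]
      have hat : a * (-(c * (a*a)⁻¹)) = -b := by rw [hb]; field_simp
      rw [hat] at hl
      exact hl
    · -- i ≡ 3 : σ^i b = -σ b
      have he : (σ ^ (3:ℤ)) b = -σ b := by
        rw [show (3:ℤ) = ((3:ℕ):ℤ) from rfl, zpow_natCast]
        show σ (σ (σ b)) = -σ b
        rw [hb2, map_neg]
      have ht3 : σ (-(σ c * (a * σ a)⁻¹)) ≠ -(σ c * (a * σ a)⁻¹) := by
        intro hE
        rw [map_neg, neg_inj] at hE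
        exact ht1 hE
      obtain ⟨l₁, l₂, hl⟩ := surj _ ht3 a ha0 d
      refine ⟨l₁, l₂, ?_⟩
      rw [hmod, h, he]
      have hat : a * (-(σ c * (a * σ a)⁻¹)) = -σ b := by rw [hσb]; field_simp
      rw [hat] at hl
      exact hl
  -- choose a good a among p, q, p+q
  by_cases hGp : σ c * (p*p) = c * (σ p * σ p)
  · by_cases hGq : σ c * (q*q) = c * (σ q * σ q)
    · by_cases hGpq : σ c * ((p+q)*(p+q)) = c * (σ (p+q) * σ (p+q))
      · exfalso
        rw [hσp] at hGp
        rw [hσq] at hGq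
        have hGq' : σ c * (q*q) = c * (p*p) := by linear_combination hGq
        have hsq : (σ c - c) * ((σ c + c) * ((p*p) * (q*q))) = 0 := by
          linear_combination (σ c * (q*q)) * hGp + (c * (q*q)) * hGq'
        have hcc : σ c = c := by
          rcases mul_eq_zero.mp hsq with h3 | h3
          · exact sub_eq_zero.mp h3
          · rcases mul_eq_zero.mp h3 with h5 | h5
            · exact absurd (eq_neg_of_add_eq_zero_left h5) hc1
            · exact absurd h5 (mul_ne_zero (mul_ne_zero hp0 hp0) (mul_ne_zero hq0 hq0))
        have hσpq : σ (p + q) = q - p := by rw [map_add, hσp, hσq]; ring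
        rw [hσpq, hcc] at hGpq
        have h4pq : c * ((2:k) * 2 * (p * q)) = 0 := by linear_combination hGpq
        rcases mul_eq_zero.mp h4pq with h3 | h3
        · exact hc0 h3
        · rcases mul_eq_zero.mp h3 with h5 | h5
          · have h2 : (2:k) = 0 := by
              rcases mul_eq_zero.mp h5 with h6 | h6 <;> exact h6
            apply hc1
            rw [hcc]
            have hcc2 : c + c = 0 := by linear_combination c * h2
            exact eq_neg_of_add_eq_zero_left hcc2
          · exact mul_ne_zero hp0 hq0 h5
      · exact key (p+q) hpq0 hpq2 hGpq
    · exact key q hq0 hq2 hGq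
  · exact key p hp0 hp2 hGp
end
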